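/- Let G be the graph with vertex set T and edges {t't : t' ∈ A*_t}, and suppose c : T → ℕ is a proper colouring of G. Then every t ∈ Σ(T) has a 2-extension t' ∈ Σ(T) such that every 1-extension t'' of t' satisfies c(t'') > c(t*). -/

import Mathlib

/-- An element of the tree `T`: an injective, co-infinite sequence `t : α → ℕ`
(with `ℕ = {1,2,3,…}`) of countable ordinal length `α`.  We encode such a
sequence as a total function `f : Ordinal → ℕ` taking a *positive* value
exactly on the ordinals `β < len` (the value `0` plays the role of
"undefined", which is harmless since the paper's `ℕ` starts at `1`). -/
structure CSeq where
  /-- the length (domain) of the sequence, a countable ordinal -/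
  len : Ordinal
  len_countable : len < Ordinal.omega 1
  /-- the sequence itself, with `f β = 0` meaning "β is outside the domain" -/
  f : Ordinal → ℕ
  dom_iff : ∀ β, β < len ↔ f β ≠ 0
  inj : ∀ β γ, β < len → γ < len → f β = f γ → β = γ
  coinf : {n : ℕ | n ≠ 0 ∧ n ∉ Set.range f}.Infinite

namespace CSeq

/-- the extension order on `T`: `s ≤ t` iff `s = t ↾ dom s`. -/
def Ext (s t : CSeq) : Prop := ∀ β, s.f β ≠ 0 → t.f β = s.f β

/-- strict extension: `s < t`. -/
def ExtLt (s t : CSeq) : Prop := s.Ext t ∧ s ≠ t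

/-- the image `im t ⊆ ℕ = {1,2,…}` of a sequence `t`. -/
def im (t : CSeq) : Set ℕ := {n | n ≠ 0 ∧ n ∈ Set.range t.f}

/-- `t ∈ Σ(T)`: the length of `t` is a successor ordinal. -/
def IsSucc (t : CSeq) : Prop := ∃ α, t.len = α + 1

/-- `last t`: the last value of a sequence (of successor length). -/
noncomputable def lastVal (t : CSeq) : ℕ := t.f (Ordinal.pred t.len)

/-- the restriction `t ↾ γ` of a sequence `t` to an initial segment `γ ≤ dom t`. -/
noncomputable def restrict (t : CSeq) (γ : Ordinal) (h : γ ≤ t.len) : CSeq where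
  len := γ
  len_countable := lt_of_le_of_lt h t.len_countable
  f := fun β => if β < γ then t.f β else 0
  dom_iff := by
    intro β
    constructor
    · intro hβ
      simpa [hβ] using (t.dom_iff β).1 (lt_of_lt_of_le hβ h)
    · intro hβ
      by_contra hc
      simp [hc] at hβ
  inj := by
    intro β γ' hβ hγ
    simp only [if_pos hβ, if_pos hγ]
    exact t.inj β γ' (lt_of_lt_of_le hβ h) (lt_of_lt_of_le hγ h)
  coinf := t.coinf.mono (by
    rintro n ⟨hn0, hn⟩
    refine ⟨hn0, ?_⟩
    rintro ⟨β, hβ⟩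
    by_cases hb : β < γ
    · exact hn ⟨β, by simpa [hb] using hβ⟩
    · simp only [if_neg hb] at hβ
      exact hn0 hβ.symm)

/-- `t* := t ↾ α` for `t` of successor length `α + 1`: the immediate
predecessor of `t` in the tree. -/
noncomputable def star (t : CSeq) : CSeq := t.restrict (Ordinal.pred t.len) (Ordinal.pred_le_self _)

/-- `A_t := {s ≤ t : s ∈ Σ(T), last s = min (im t \ im s*)}`. -/
def A (t : CSeq) : Set CSeq :=
  {s | s.Ext t ∧ s.IsSucc ∧ s.lastVal = sInf (t.im \ s.star.im)}

/-- `A*_t := {s* : s ∈ A_t}`. -/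
def Astar (t : CSeq) : Set CSeq := star '' A t

/-- the graph `G` with vertex set `T` and edges `{t't : t' ∈ A*_t}`. -/
def G : SimpleGraph CSeq := SimpleGraph.fromRel (fun t' t => t' ∈ Astar t)

/-- the graph `G'` with vertex set `T` and edges `{t't : t' ∈ A_t}`. -/
def G' : SimpleGraph CSeq := SimpleGraph.fromRel (fun t' t => t' ∈ A t)

/-- two `t`–`t'` paths are independent (internally disjoint) if they share no
vertices other than `t` and `t'`. -/
def InternallyDisjoint {t t' : CSeq} (p q : G.Path t t') : Prop :=
  ∀ v, v ∈ p.1.support → v ∈ q.1.support → v = t ∨ v = t'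

/-- `t'` is a `k`-extension of `t ∈ Σ(T)` if `t' > t` and every element of
`im t' \ im t` is greater than `a_{k+1}`, where `a_1 < … < a_{k+1}` are the
`k+1` smallest elements of `ℕ \ (im t ∪ [last t])`.  (Recall `Nat.nth p k` is
the `(k+1)`-st element of `{n | p n}` in increasing order.) -/
def IsKExt (k : ℕ) (t t' : CSeq) : Prop :=
  t.ExtLt t' ∧ ∀ n ∈ t'.im \ t.im,
    Nat.nth (fun m => m ∉ t.im ∧ t.lastVal < m) k < n

end CSeq

/-!
If the statement failed for `t`, every successor-length `k`-extension `u` of `t` would have an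
`l`-extension `w` of colour at most `K := c t*`; appending to `w` a fresh value above `last u`
gives a new successor-length `k`-extension `u'` with `u'* = w`. Iterating yields
`u₀ < u₁ < ⋯` in which every value that `uᵢ*` adds to `uⱼ` (for `j < i`) exceeds `last uⱼ`,
so `last uⱼ = min (im uᵢ* \ im uⱼ*)`, i.e. `uⱼ* ∈ A*_{uᵢ*}`. The stars thus form an infinite
clique of `G`, which a proper colouring cannot bound by `K`.
-/

namespace CSeq

theorem ext {s t : CSeq} (hlen : s.len = t.len) (hf : s.f = t.f) : s = t := by
  cases s; cases t; cases hlen; cases hf; rfl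

theorem ne_of_len_lt {s t : CSeq} (h : s.len < t.len) : s ≠ t :=
  fun he => h.ne (congrArg len he)

theorem Ext.refl (s : CSeq) : s.Ext s := fun _ _ => rfl

theorem Ext.trans {s t u : CSeq} (h : s.Ext t) (h' : t.Ext u) : s.Ext u := by
  intro β hβ
  rw [h' β (by rwa [h β hβ]), h β hβ]

theorem Ext.im_subset {s t : CSeq} (h : s.Ext t) : s.im ⊆ t.im := by
  rintro n ⟨hn, β, rfl⟩
  exact ⟨hn, β, h β hn⟩

theorem Ext.len_le {s t : CSeq} (h : s.Ext t) : s.len ≤ t.len := by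
  by_contra! hlt
  have hs : s.f t.len ≠ 0 := (s.dom_iff t.len).1 hlt
  exact lt_irrefl _ ((t.dom_iff t.len).2 (by rwa [h _ hs]))

theorem Ext.eq_of_len_le {s t : CSeq} (h : s.Ext t) (hl : t.len ≤ s.len) : s = t := by
  refine ext (h.len_le.antisymm hl) (funext fun β => ?_)
  by_cases hs : s.f β = 0
  · have ht : t.f β = 0 := by
      by_contra ht
      exact (s.dom_iff β).1 (((t.dom_iff β).2 ht).trans_le hl) hs
    rw [hs, ht]
  · exact (h β hs).symm

theorem extLt_of_ext_of_len_lt {s t : CSeq} (h : s.Ext t) (hl : s.len < t.len) : s.ExtLt t :=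
  ⟨h, ne_of_len_lt hl⟩

theorem ExtLt.len_lt {s t : CSeq} (h : s.ExtLt t) : s.len < t.len :=
  h.1.len_le.lt_of_ne fun he => h.2 (h.1.eq_of_len_le he.ge)

theorem ExtLt.trans_ext {s t u : CSeq} (h : s.ExtLt t) (h' : t.Ext u) : s.ExtLt u :=
  extLt_of_ext_of_len_lt (h.1.trans h') (h.len_lt.trans_le h'.len_le)

theorem restrict_ext (t : CSeq) (γ : Ordinal) (h : γ ≤ t.len) : (t.restrict γ h).Ext t := by
  intro β hβ
  change (if β < γ then t.f β else 0) ≠ 0 at hβ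
  change t.f β = if β < γ then t.f β else 0
  split_ifs at hβ ⊢
  · rfl
  · exact absurd rfl hβ

theorem star_ext (s : CSeq) : s.star.Ext s := restrict_ext _ _ _

theorem IsSucc.pred_len_lt {s : CSeq} (hs : s.IsSucc) : Ordinal.pred s.len < s.len := by
  obtain ⟨α, hα⟩ := hs
  rw [hα, Ordinal.pred_add_one]
  exact Order.lt_add_one_iff.2 le_rfl

theorem IsSucc.le_pred_len {s : CSeq} (hs : s.IsSucc) {β : Ordinal} (hβ : β < s.len) :
    β ≤ Ordinal.pred s.len := by
  obtain ⟨α, hα⟩ := hs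
  rw [hα, Ordinal.pred_add_one]
  exact Order.lt_add_one_iff.1 (hα ▸ hβ)

theorem IsSucc.lastVal_mem_im {s : CSeq} (hs : s.IsSucc) : s.lastVal ∈ s.im :=
  ⟨(s.dom_iff _).1 hs.pred_len_lt, _, rfl⟩

theorem IsSucc.lastVal_not_mem_im_star {s : CSeq} (hs : s.IsSucc) : s.lastVal ∉ s.star.im := by
  rintro ⟨hne, β, hβ⟩
  have hlt : β < Ordinal.pred s.len := (s.star.dom_iff β).2 (hβ ▸ hne)
  have heq : s.f β = s.f (Ordinal.pred s.len) := by rw [star_ext s β (hβ ▸ hne), hβ]; rfl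
  exact hlt.ne (s.inj _ _ (hlt.trans hs.pred_len_lt) hs.pred_len_lt heq)

theorem IsSucc.im_subset_insert {s : CSeq} (hs : s.IsSucc) :
    s.im ⊆ insert s.lastVal s.star.im := by
  rintro m ⟨hm, β, rfl⟩
  rcases (hs.le_pred_len ((s.dom_iff β).2 hm)).lt_or_eq with hlt | rfl
  · exact Or.inr ⟨hm, β, if_pos hlt⟩
  · exact Or.inl rfl

theorem star_extLt {s : CSeq} (hs : s.IsSucc) : s.star.ExtLt s :=
  extLt_of_ext_of_len_lt (star_ext s) hs.pred_len_lt

theorem ExtLt.ext_star {s t : CSeq} (h : t.ExtLt s) (hs : s.IsSucc) : t.Ext s.star := by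
  intro β hβ
  have hlt : β < Ordinal.pred s.len :=
    ((t.dom_iff β).2 hβ).trans_le (hs.le_pred_len h.len_lt)
  exact (if_pos hlt).trans (h.1 β hβ)

theorem ExtLt.lastVal_not_mem_im {s t : CSeq} (h : t.ExtLt s) (hs : s.IsSucc) :
    s.lastVal ∉ t.im :=
  fun hm => hs.lastVal_not_mem_im_star ((h.ext_star hs).im_subset hm)

theorem lastVal_lt_nth (t : CSeq) (k : ℕ) :
    t.lastVal < Nat.nth (fun m => m ∉ t.im ∧ t.lastVal < m) k := by
  have hinf : {m | m ∉ t.im ∧ t.lastVal < m}.Infinite := by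
    refine (t.coinf.sdiff (Set.finite_Iic t.lastVal)).mono ?_
    rintro m ⟨⟨-, hm⟩, hle⟩
    exact ⟨fun h => hm h.2, not_le.1 hle⟩
  exact (Nat.nth_mem_of_infinite hinf k).2

noncomputable def snoc (u : CSeq) (n : ℕ) (hn : n ≠ 0) (hn' : n ∉ Set.range u.f) : CSeq where
  len := u.len + 1
  len_countable := (Cardinal.isSuccLimit_omega 1).add_one_lt u.len_countable
  f β := if β = u.len then n else u.f β
  dom_iff β := by
    rw [Order.lt_add_one_iff]
    by_cases hb : β = u.len
    · simp [hb, hn]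
    · rw [if_neg hb, ← u.dom_iff, le_iff_lt_or_eq, or_iff_left hb]
  inj β γ hβ hγ hfg := by
    rw [Order.lt_add_one_iff] at hβ hγ
    split_ifs at hfg with hb hg hg
    · rw [hb, hg]
    · exact absurd ⟨γ, hfg.symm⟩ hn'
    · exact absurd ⟨β, hfg⟩ hn'
    · exact u.inj β γ (hβ.lt_of_ne hb) (hγ.lt_of_ne hg) hfg
  coinf := by
    refine (u.coinf.sdiff (Set.finite_singleton n)).mono ?_
    rintro m ⟨⟨hm, hmr⟩, hmn⟩
    refine ⟨hm, ?_⟩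
    rintro ⟨β, hβ⟩
    dsimp only at hβ
    split_ifs at hβ
    · exact hmn hβ.symm
    · exact hmr ⟨β, hβ⟩

theorem exists_star_eq (w : CSeq) (M : ℕ) :
    ∃ u : CSeq, u.IsSucc ∧ u.star = w ∧ M < u.lastVal := by
  obtain ⟨n, ⟨hn, hn'⟩, hMn⟩ := w.coinf.exists_gt M
  have hpred : Ordinal.pred (snoc w n hn hn').len = w.len := Ordinal.pred_add_one _
  refine ⟨snoc w n hn hn', ⟨w.len, rfl⟩, ext hpred (funext fun β => ?_), ?_⟩
  · change (if β < Ordinal.pred (w.len + 1) then (if β = w.len then n else w.f β) else 0) = w.f β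
    rw [Ordinal.pred_add_one]
    split_ifs with hlt heq
    · exact absurd heq hlt.ne
    · rfl
    · by_contra hne
      exact hlt ((w.dom_iff β).2 (Ne.symm hne))
  · change M < if Ordinal.pred (w.len + 1) = w.len then n else w.f _
    rw [Ordinal.pred_add_one, if_pos rfl]
    exact hMn

def ExtAbove (s t : CSeq) : Prop := s.Ext t ∧ ∀ m ∈ t.im \ s.im, s.lastVal < m

theorem ExtAbove.refl (s : CSeq) : s.ExtAbove s :=
  ⟨Ext.refl s, fun _ hm => absurd hm.1 hm.2⟩

theorem ExtAbove.trans {s t u : CSeq} (h : s.ExtAbove t) (h' : t.ExtAbove u)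
    (hle : s.lastVal ≤ t.lastVal) : s.ExtAbove u := by
  refine ⟨h.1.trans h'.1, fun m ⟨hm, hms⟩ => ?_⟩
  by_cases hmt : m ∈ t.im
  · exact h.2 m ⟨hmt, hms⟩
  · exact hle.trans_lt (h'.2 m ⟨hm, hmt⟩)

theorem ExtAbove.of_star {s t : CSeq} (h : s.ExtAbove t.star) (ht : t.IsSucc)
    (hlt : s.lastVal < t.lastVal) : s.ExtAbove t := by
  refine ⟨h.1.trans (star_ext t), fun m ⟨hm, hms⟩ => ?_⟩
  rcases ht.im_subset_insert hm with rfl | hm'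
  · exact hlt
  · exact h.2 m ⟨hm', hms⟩

theorem IsKExt.extAbove {k : ℕ} {s t : CSeq} (h : IsKExt k s t) : s.ExtAbove t :=
  ⟨h.1.1, fun m hm => (lastVal_lt_nth s k).trans (h.2 m hm)⟩

theorem IsKExt.of_extAbove {k : ℕ} {t u u' : CSeq} (h : IsKExt k t u) (hu : u.IsSucc)
    (h' : u.ExtAbove u') : IsKExt k t u' := by
  refine ⟨h.1.trans_ext h'.1, fun m ⟨hm, hmt⟩ => ?_⟩
  by_cases hmu : m ∈ u.im
  · exact h.2 m ⟨hmu, hmt⟩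
  · exact (h.2 _ ⟨hu.lastVal_mem_im, h.1.lastVal_not_mem_im hu⟩).trans (h'.2 m ⟨hm, hmu⟩)

theorem exists_isSucc_isKExt (k : ℕ) (t : CSeq) : ∃ u : CSeq, u.IsSucc ∧ IsKExt k t u := by
  obtain ⟨u, hu, rfl, hlast⟩ := exists_star_eq t (Nat.nth (fun m => m ∉ t.im ∧ t.lastVal < m) k)
  refine ⟨u, hu, star_extLt hu, fun m ⟨hm, hmt⟩ => ?_⟩
  rcases hu.im_subset_insert hm with rfl | hm'
  · exact hlast
  · exact absurd hm' hmt

theorem star_adj_of_extAbove {s t : CSeq} (hs : s.IsSucc) (h : s.ExtAbove t) : G.Adj s.star t := by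
  have hmem : s.lastVal ∈ t.im \ s.star.im :=
    ⟨h.1.im_subset hs.lastVal_mem_im, hs.lastVal_not_mem_im_star⟩
  have hmin : s.lastVal = sInf (t.im \ s.star.im) := by
    refine le_antisymm (le_csInf ⟨_, hmem⟩ fun m ⟨hm, hms⟩ => ?_) (Nat.sInf_le hmem)
    by_cases hmi : m ∈ s.im
    · rcases hs.im_subset_insert hmi with rfl | hm'
      · exact le_rfl
      · exact absurd hm' hms
    · exact (h.2 m ⟨hm, hmi⟩).le
  rw [G, SimpleGraph.fromRel_adj]
  exact ⟨ne_of_len_lt (hs.pred_len_lt.trans_le h.1.len_le), Or.inl ⟨s, ⟨h.1, hs, hmin⟩, rfl⟩⟩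

section Chain

variable {u : ℕ → CSeq}

theorem extAbove_of_le (hsucc : ∀ n, (u n).IsSucc) (hstep : ∀ n, (u n).ExtAbove (u (n + 1)).star)
    (hlast : ∀ n, (u n).lastVal < (u (n + 1)).lastVal) {i j : ℕ} (hij : i ≤ j) :
    (u i).ExtAbove (u j) := by
  induction j, hij using Nat.le_induction with
  | base => exact ExtAbove.refl _
  | succ j hij ih =>
    exact ih.trans ((hstep j).of_star (hsucc _) (hlast j))
      ((strictMono_nat_of_lt_succ hlast).monotone hij)

theorem star_adj_star_of_lt (hsucc : ∀ n, (u n).IsSucc)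
    (hstep : ∀ n, (u n).ExtAbove (u (n + 1)).star)
    (hlast : ∀ n, (u n).lastVal < (u (n + 1)).lastVal) {i j : ℕ} (hij : i < j) :
    G.Adj (u i).star (u j).star := by
  obtain ⟨j, rfl⟩ := Nat.exists_eq_add_one.2 (i.zero_le.trans_lt hij)
  have hle : i ≤ j := Nat.lt_add_one_iff.1 hij
  exact star_adj_of_extAbove (hsucc i) ((extAbove_of_le hsucc hstep hlast hle).trans (hstep j)
    ((strictMono_nat_of_lt_succ hlast).monotone hle))

end Chain

theorem exists_isKExt_step {k l : ℕ} {t : CSeq} {P : CSeq → Prop}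
    (H : ∀ u : CSeq, u.IsSucc → IsKExt k t u → ∃ w, IsKExt l u w ∧ P w)
    {u : CSeq} (hu : u.IsSucc) (hk : IsKExt k t u) :
    ∃ u' : CSeq, u'.IsSucc ∧ IsKExt k t u' ∧ u.ExtAbove u'.star ∧
      u.lastVal < u'.lastVal ∧ P u'.star := by
  obtain ⟨w, hw, hPw⟩ := H u hu hk
  obtain ⟨u', hu', rfl, hlast⟩ := exists_star_eq w u.lastVal
  exact ⟨u', hu', hk.of_extAbove hu (hw.extAbove.of_star hu' hlast), hw.extAbove, hlast, hPw⟩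

theorem exists_isKExt_forall_isKExt_lt (c : CSeq → ℕ) (hc : ∀ t t' : CSeq, G.Adj t t' → c t ≠ c t')
    (k l : ℕ) (t : CSeq) (K : ℕ) :
    ∃ t' : CSeq, t'.IsSucc ∧ IsKExt k t t' ∧ ∀ t'' : CSeq, IsKExt l t' t'' → K < c t'' := by
  by_contra! H
  choose! F hF using fun u => exists_isKExt_step (P := fun w => c w ≤ K) H (u := u)
  obtain ⟨u₀, hu₀⟩ := exists_isSucc_isKExt k t
  set u : ℕ → CSeq := fun n => F^[n] u₀
  have hiter : ∀ n, u (n + 1) = F (u n) := fun n => Function.iterate_succ_apply' F n u₀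
  have hu : ∀ n, (u n).IsSucc ∧ IsKExt k t (u n) := by
    intro n
    induction n with
    | zero => exact hu₀
    | succ n ih => rw [hiter]; exact ⟨(hF _ ih.1 ih.2).1, (hF _ ih.1 ih.2).2.1⟩
  have hstep (n : ℕ) := hiter n ▸ hF _ (hu n).1 (hu n).2
  have hadj {i j : ℕ} (hij : i < j) : G.Adj (u i).star (u j).star :=
    star_adj_star_of_lt (fun n => (hu n).1) (fun n => (hstep n).2.2.1)
      (fun n => (hstep n).2.2.2.1) hij
  have hinj : Function.Injective fun n => c (u (n + 1)).star := fun i j hij => by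
    by_contra hne
    rcases Ne.lt_or_gt hne with h | h
    · exact hc _ _ (hadj (Nat.succ_lt_succ h)) hij
    · exact hc _ _ (hadj (Nat.succ_lt_succ h)) hij.symm
  refine Set.infinite_range_of_injective hinj ((Set.finite_Iic K).subset ?_)
  rintro _ ⟨n, rfl⟩
  exact (hstep n).2.2.2.2

end CSeq

open CSeq in
theorem stmt9_general (c : CSeq → ℕ) (hc : ∀ t t' : CSeq, G.Adj t t' → c t ≠ c t')
    (t : CSeq) :
    ∃ t' : CSeq, t'.IsSucc ∧ IsKExt 2 t t' ∧
      ∀ t'' : CSeq, IsKExt 1 t' t'' → c t.star < c t'' :=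
  exists_isKExt_forall_isKExt_lt c hc 2 1 t (c t.star)

open CSeq in
/-- If `c : T → ℕ` is a proper colouring of `G`, then every
`t ∈ Σ(T)` has a `2`-extension `t' ∈ Σ(T)` such that every `1`-extension `t''`
of `t'` satisfies `c t'' > c t*`. -/
theorem stmt9 (c : CSeq → ℕ) (hc : ∀ t t' : CSeq, G.Adj t t' → c t ≠ c t')
    (t : CSeq) (ht : t.IsSucc) :
    ∃ t' : CSeq, t'.IsSucc ∧ IsKExt 2 t t' ∧
      ∀ t'' : CSeq, IsKExt 1 t' t'' → c t.star < c t'' :=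
  stmt9_general c hc t
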